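/- arXiv:2009.11359 — 4 statements merged into one kernel-verified Lean document; each statement's English description precedes it below -/
import Mathlib

section
/- One step of the optimistic gradient scheme satisfies ‖z_{k+1} - z*‖² ≤ (1 - ηm)‖z_k - z*‖² - (1 - 2ηm)‖z_{k+1/2} - z_k‖² + η²L²‖z_{k+1/2} - z_{k-1/2}‖². -/
/-!
Write `p = z_{k+1/2} - z*`, `w = z_{k+1/2} - z_k` and `g = η F(z_{k+1/2})`. Then
`z_{k+1} - z* = p - w - g`, `z_k - z* = p - w` and `w + g = η (F(z_{k+1/2}) - F(z_{k-1/2}))`,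
and expanding squares gives the exact identity
`‖z_{k+1} - z*‖² = ‖z_k - z*‖² - ‖w‖² - 2⟪g, p⟫ + ‖w + g‖²`.
Strong monotonicity against the zero `z*` gives `2⟪g, p⟫ ≥ 2ηm‖p‖² ≥ ηm‖z_k - z*‖² - 2ηm‖w‖²`
(since `‖p - w‖² ≤ 2‖p‖² + 2‖w‖²`), and the Lipschitz bound controls `‖w + g‖²`.
-/

open RealInnerProductSpace

section

variable {E : Type*} [NormedAddCommGroup E] [InnerProductSpace ℝ E]

theorem norm_sub_sub_sq_eq (p w g : E) :
    ‖p - w - g‖ ^ 2 = ‖p - w‖ ^ 2 - ‖w‖ ^ 2 - 2 * ⟪g, p⟫ + ‖w + g‖ ^ 2 := by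
  rw [norm_sub_sq_real, norm_add_sq_real, inner_sub_left, real_inner_comm p g]
  ring

theorem norm_sub_sq_le_two_mul (a b : E) : ‖a - b‖ ^ 2 ≤ 2 * ‖a‖ ^ 2 + 2 * ‖b‖ ^ 2 := by
  have := parallelogram_law_with_norm ℝ a b
  linarith [sq_nonneg ‖a + b‖]

theorem mul_norm_sq_le_inner_of_apply_eq_zero {F : E → E} {m : ℝ}
    (hmono : ∀ z₁ z₂, ⟪F z₁ - F z₂, z₁ - z₂⟫ ≥ m * ‖z₁ - z₂‖ ^ 2) {zs : E} (hzs : F zs = 0)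
    (z : E) : m * ‖z - zs‖ ^ 2 ≤ ⟪F z, z - zs⟫ := by
  simpa [hzs] using hmono z zs

theorem norm_smul_sub_sq_le_of_lipschitz {F : E → E} {L : ℝ}
    (hlip : ∀ z₁ z₂, ‖F z₁ - F z₂‖ ≤ L * ‖z₁ - z₂‖) (η : ℝ) (a b : E) :
    ‖η • (F a - F b)‖ ^ 2 ≤ η ^ 2 * L ^ 2 * ‖a - b‖ ^ 2 := by
  calc ‖η • (F a - F b)‖ ^ 2 = η ^ 2 * ‖F a - F b‖ ^ 2 := by
        rw [norm_smul, mul_pow, Real.norm_eq_abs, sq_abs]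
    _ ≤ η ^ 2 * (L * ‖a - b‖) ^ 2 := by gcongr; exact hlip a b
    _ = η ^ 2 * L ^ 2 * ‖a - b‖ ^ 2 := by ring

theorem optimisticGradient_norm_sub_sq_le (F : E → E) {m η : ℝ} (hm : 0 ≤ m) (hη : 0 ≤ η)
    {zs zk zhalfprev zhalf znext : E}
    (hmono : m * ‖zhalf - zs‖ ^ 2 ≤ ⟪F zhalf, zhalf - zs⟫)
    (hhalf : zhalf = zk - η • F zhalfprev) (hfull : znext = zk - η • F zhalf) :
    ‖znext - zs‖ ^ 2 ≤ (1 - η * m) * ‖zk - zs‖ ^ 2 - (1 - 2 * η * m) * ‖zhalf - zk‖ ^ 2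
      + ‖η • (F zhalf - F zhalfprev)‖ ^ 2 := by
  set p := zhalf - zs with hp
  set w := zhalf - zk with hw
  have hnext : znext - zs = p - w - η • F zhalf := by rw [hfull, hp, hw]; abel
  have hk : zk - zs = p - w := by rw [hp, hw]; abel
  have hdiff : w + η • F zhalf = η • (F zhalf - F zhalfprev) := by
    rw [hw, hhalf]; module
  have hdescent : 2 * η * m * ‖p‖ ^ 2 ≤ 2 * ⟪η • F zhalf, p⟫ := by
    rw [real_inner_smul_left]
    linarith [mul_le_mul_of_nonneg_left hmono hη]
  have hsplit : η * m * ‖p - w‖ ^ 2 ≤ η * m * (2 * ‖p‖ ^ 2 + 2 * ‖w‖ ^ 2) :=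
    mul_le_mul_of_nonneg_left (norm_sub_sq_le_two_mul p w) (mul_nonneg hη hm)
  rw [hnext, hk, norm_sub_sub_sq_eq, hdiff]
  linarith

end

theorem stmt_8_general (d : ℕ) (m L η : ℝ) (hm : 0 < m) (hη : 0 < η)
    (F : EuclideanSpace ℝ (Fin d) → EuclideanSpace ℝ (Fin d))
    (hmono : ∀ z₁ z₂, ⟪F z₁ - F z₂, z₁ - z₂⟫ ≥ m * ‖z₁ - z₂‖ ^ 2)
    (hlip : ∀ z₁ z₂, ‖F z₁ - F z₂‖ ≤ L * ‖z₁ - z₂‖)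
    (zs : EuclideanSpace ℝ (Fin d)) (hzs : F zs = 0)
    (zk zhalfprev zhalf znext : EuclideanSpace ℝ (Fin d))
    (hhalf : zhalf = zk - η • F zhalfprev)
    (hfull : znext = zk - η • F zhalf) :
    ‖znext - zs‖ ^ 2 ≤ (1 - η * m) * ‖zk - zs‖ ^ 2
      - (1 - 2 * η * m) * ‖zhalf - zk‖ ^ 2
      + η ^ 2 * L ^ 2 * ‖zhalf - zhalfprev‖ ^ 2 := by
  have hstep := optimisticGradient_norm_sub_sq_le F hm.le hη.le
    (mul_norm_sq_le_inner_of_apply_eq_zero hmono hzs zhalf) hhalf hfull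
  linarith [norm_smul_sub_sq_le_of_lipschitz hlip η zhalf zhalfprev]

theorem stmt_8 (d : ℕ) (m L η : ℝ) (hm : 0 < m) (hmL : m ≤ L) (hη : 0 < η)
    (F : EuclideanSpace ℝ (Fin d) → EuclideanSpace ℝ (Fin d))
    (hmono : ∀ z₁ z₂, ⟪F z₁ - F z₂, z₁ - z₂⟫ ≥ m * ‖z₁ - z₂‖ ^ 2)
    (hlip : ∀ z₁ z₂, ‖F z₁ - F z₂‖ ≤ L * ‖z₁ - z₂‖)
    (zs : EuclideanSpace ℝ (Fin d)) (hzs : F zs = 0)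
    (zk zhalfprev zhalf znext : EuclideanSpace ℝ (Fin d))
    (hhalf : zhalf = zk - η • F zhalfprev)
    (hfull : znext = zk - η • F zhalf) :
    ‖znext - zs‖ ^ 2 ≤ (1 - η * m) * ‖zk - zs‖ ^ 2
      - (1 - 2 * η * m) * ‖zhalf - zk‖ ^ 2
      + η ^ 2 * L ^ 2 * ‖zhalf - zhalfprev‖ ^ 2 :=
  stmt_8_general d m L η hm hη F hmono hlip zs hzs zk zhalfprev zhalf znext hhalf hfull
end

section
/- Stochastic gradient descent under the strong growth condition satisfies E‖z_{k+1} - z*‖² ≤ (1 - 2ηm + η²δL²)‖z_k - z*‖², where the expectation is over the stochastic sample ε_k; in particular, with η = 1/(Lκδ) one obtains E‖z_k - z*‖² ≤ (1 - 1/(κ²δ))^k ‖z_0 - z*‖². -/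
/-!
Expanding the square, one step `x ↦ x - η F(x; ε)` changes `‖x - z*‖²` in expectation into
`‖x - z*‖² - 2η⟪x - z*, F x⟫ + η² E‖F(x; ε)‖²`; strong monotonicity bounds the middle term and
strong growth together with the Lipschitz bound `‖F x‖ ≤ L ‖x - z*‖` bounds the last, giving the
factor `1 - 2ηm + η²δL²`, which equals `1 - 1/(κ²δ)` for `η = 1/(Lκδ)`. Since the `k`-th iterate
depends only on the first `k` samples and `ε_k` is independent of them, integrating out the last
sample first (Tonelli on `Ω^{k+1} = Ω^k × Ω`) iterates the one-step bound.
-/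

open RealInnerProductSpace MeasureTheory
open scoped ENNReal

section Iteration

variable {Ω E : Type*} [MeasurableSpace Ω] [MeasurableSpace E]

theorem lintegral_pi_fin_succ_eq_lintegral_snoc (μ : Measure Ω) [SigmaFinite μ] (k : ℕ)
    {f : (Fin (k + 1) → Ω) → ℝ≥0∞} (hf : Measurable f) :
    ∫⁻ ω, f ω ∂(Measure.pi fun _ => μ) =
      ∫⁻ ω, ∫⁻ a, f (Fin.snoc ω a) ∂μ ∂(Measure.pi fun _ => μ) := by
  set e := MeasurableEquiv.piFinSuccAbove (fun _ => Ω) (Fin.last k)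
  have he : MeasurePreserving e.symm (μ.prod (Measure.pi fun _ => μ)) (Measure.pi fun _ => μ) :=
    (measurePreserving_piFinSuccAbove (fun _ => μ) (Fin.last k)).symm
  have hsnoc : ∀ p, e.symm p = Fin.snoc p.2 p.1 := fun p => by
    simp only [e, MeasurableEquiv.piFinSuccAbove_symm_apply, Fin.insertNthEquiv_last]
    rfl
  have hmeas : Measurable fun p : Ω × (Fin k → Ω) => f (Fin.snoc p.2 p.1) := by
    simpa only [Function.comp_def, hsnoc] using hf.comp he.measurable
  rw [← he.lintegral_comp hf]
  simp only [hsnoc]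
  exact lintegral_prod_symm' _ hmeas

variable {Φ : E → Ω → E} {z : (k : ℕ) → (Fin k → Ω) → E}

theorem measurable_of_recursion (hΦ : Measurable (Function.uncurry Φ))
    (hiter : ∀ k ω, z (k + 1) ω = Φ (z k (Fin.init ω)) (ω (Fin.last k))) (k : ℕ) :
    Measurable (z k) := by
  induction k with
  | zero => exact Subsingleton.measurable
  | succ k ih =>
    rw [funext (hiter k)]
    exact hΦ.comp ((ih.comp (measurable_pi_lambda _ fun i => measurable_pi_apply _)).prodMk
      (measurable_pi_apply _))

theorem lintegral_comp_recursion_le (μ : Measure Ω) [SigmaFinite μ]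
    (hΦ : Measurable (Function.uncurry Φ))
    (hiter : ∀ k ω, z (k + 1) ω = Φ (z k (Fin.init ω)) (ω (Fin.last k)))
    {z0 : E} (hz0 : ∀ ω, z 0 ω = z0) {V : E → ℝ≥0∞} (hV : Measurable V) {ρ : ℝ≥0∞}
    (hstep : ∀ x, ∫⁻ a, V (Φ x a) ∂μ ≤ ρ * V x) (k : ℕ) :
    ∫⁻ ω, V (z k ω) ∂(Measure.pi fun _ : Fin k => μ) ≤ ρ ^ k * V z0 := by
  induction k with
  | zero => simp [hz0]
  | succ k ih =>
    have hsnoc : ∀ ω a, z (k + 1) (Fin.snoc ω a) = Φ (z k ω) a := by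
      intro ω a
      rw [hiter, Fin.init_snoc, Fin.snoc_last]
    calc ∫⁻ ω, V (z (k + 1) ω) ∂(Measure.pi fun _ => μ)
        = ∫⁻ ω, ∫⁻ a, V (Φ (z k ω) a) ∂μ ∂(Measure.pi fun _ => μ) := by
          rw [lintegral_pi_fin_succ_eq_lintegral_snoc μ k (f := fun ω => V (z (k + 1) ω))
            (hV.comp (measurable_of_recursion hΦ hiter _))]
          simp only [hsnoc]
      _ ≤ ∫⁻ ω, ρ * V (z k ω) ∂(Measure.pi fun _ => μ) := lintegral_mono fun ω => hstep _
      _ = ρ * ∫⁻ ω, V (z k ω) ∂(Measure.pi fun _ => μ) :=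
          lintegral_const_mul _ (hV.comp (measurable_of_recursion hΦ hiter k))
      _ ≤ ρ ^ (k + 1) * V z0 := by
          rw [pow_succ', mul_assoc]
          gcongr

theorem integral_comp_recursion_le (μ : Measure Ω) [SigmaFinite μ]
    (hΦ : Measurable (Function.uncurry Φ))
    (hiter : ∀ k ω, z (k + 1) ω = Φ (z k (Fin.init ω)) (ω (Fin.last k)))
    {z0 : E} (hz0 : ∀ ω, z 0 ω = z0) {V : E → ℝ} (hV : Measurable V) (hV0 : ∀ x, 0 ≤ V x)
    {ρ : ℝ} (hρ : 0 ≤ ρ) (hint : ∀ x, Integrable (fun a => V (Φ x a)) μ)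
    (hstep : ∀ x, ∫ a, V (Φ x a) ∂μ ≤ ρ * V x) (k : ℕ) :
    ∫ ω, V (z k ω) ∂(Measure.pi fun _ : Fin k => μ) ≤ ρ ^ k * V z0 := by
  have hstep' : ∀ x, ∫⁻ a, ENNReal.ofReal (V (Φ x a)) ∂μ ≤ ENNReal.ofReal ρ * .ofReal (V x) := by
    intro x
    rw [← ofReal_integral_eq_lintegral_ofReal (hint x) (.of_forall fun a => hV0 _),
      ← ENNReal.ofReal_mul hρ]
    exact ENNReal.ofReal_le_ofReal (hstep x)
  have hlint := lintegral_comp_recursion_le μ hΦ hiter hz0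
    (V := fun x => ENNReal.ofReal (V x)) (ENNReal.measurable_ofReal.comp hV) hstep' k
  rw [← ENNReal.ofReal_pow hρ, ← ENNReal.ofReal_mul (pow_nonneg hρ k)] at hlint
  rw [integral_eq_lintegral_of_nonneg_ae (.of_forall fun ω => hV0 _)
    (hV.comp (measurable_of_recursion hΦ hiter k)).aestronglyMeasurable]
  exact ENNReal.toReal_le_of_le_ofReal (mul_nonneg (pow_nonneg hρ k) (hV0 z0)) hlint

end Iteration

section Step

variable {Ω E : Type*} [MeasurableSpace Ω] [NormedAddCommGroup E] [InnerProductSpace ℝ E]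
  {μ : Measure Ω}

theorem norm_sub_smul_sq (x g : E) (η : ℝ) :
    ‖x - η • g‖ ^ 2 = ‖x‖ ^ 2 - 2 * η * ⟪x, g⟫ + η ^ 2 * ‖g‖ ^ 2 := by
  rw [norm_sub_sq_real, inner_smul_right, norm_smul, Real.norm_eq_abs, mul_pow, sq_abs]
  ring

theorem integrable_norm_sub_smul_sq [IsFiniteMeasure μ] {G : Ω → E} (hG : Integrable G μ)
    (hG2 : Integrable (fun ω => ‖G ω‖ ^ 2) μ) (x : E) (η : ℝ) :
    Integrable (fun ω => ‖x - η • G ω‖ ^ 2) μ := by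
  simp only [norm_sub_smul_sq]
  exact ((integrable_const _).sub (((innerSL ℝ x).integrable_comp hG).const_mul _)).add
    (hG2.const_mul _)

variable [CompleteSpace E] [IsProbabilityMeasure μ]

theorem integral_norm_sub_smul_sq {G : Ω → E} (hG : Integrable G μ)
    (hG2 : Integrable (fun ω => ‖G ω‖ ^ 2) μ) (x : E) (η : ℝ) :
    ∫ ω, ‖x - η • G ω‖ ^ 2 ∂μ
      = ‖x‖ ^ 2 - 2 * η * ⟪x, ∫ ω, G ω ∂μ⟫ + η ^ 2 * ∫ ω, ‖G ω‖ ^ 2 ∂μ := by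
  have hinner : Integrable (fun ω => 2 * η * ⟪x, G ω⟫) μ :=
    ((innerSL ℝ x).integrable_comp hG).const_mul _
  have hlinear : Integrable (fun ω => ‖x‖ ^ 2 - 2 * η * ⟪x, G ω⟫) μ :=
    (integrable_const _).sub hinner
  have hmean : ∫ ω, ⟪x, G ω⟫ ∂μ = ⟪x, ∫ ω, G ω ∂μ⟫ := (innerSL ℝ x).integral_comp_comm hG
  simp only [norm_sub_smul_sq]
  rw [integral_add hlinear (hG2.const_mul _), integral_sub (integrable_const _) hinner,
    integral_const, integral_const_mul, integral_const_mul, hmean]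
  simp

theorem integral_norm_sgd_step_sub_sq_le {m L δ η : ℝ} (hδ : 0 ≤ δ) (hη : 0 ≤ η)
    {F : E → Ω → E} (hFint : ∀ z, Integrable (F z) μ)
    (hFsq : ∀ z, Integrable (fun ω => ‖F z ω‖ ^ 2) μ)
    {Fbar : E → E} (hFbar : ∀ z, Fbar z = ∫ ω, F z ω ∂μ)
    (hmono : ∀ z₁ z₂, ⟪Fbar z₁ - Fbar z₂, z₁ - z₂⟫ ≥ m * ‖z₁ - z₂‖ ^ 2)
    (hlip : ∀ z₁ z₂, ‖Fbar z₁ - Fbar z₂‖ ≤ L * ‖z₁ - z₂‖)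
    {zs : E} (hzs : Fbar zs = 0)
    (hgrowth : ∀ z, ∫ ω, ‖F z ω‖ ^ 2 ∂μ ≤ δ * ‖Fbar z‖ ^ 2) (z : E) :
    ∫ ω, ‖(z - η • F z ω) - zs‖ ^ 2 ∂μ
      ≤ (1 - 2 * η * m + η ^ 2 * δ * L ^ 2) * ‖z - zs‖ ^ 2 := by
  have hinner : m * ‖z - zs‖ ^ 2 ≤ ⟪z - zs, Fbar z⟫ := by
    simpa [hzs, real_inner_comm] using hmono z zs
  have hsecond : ∫ ω, ‖F z ω‖ ^ 2 ∂μ ≤ δ * (L ^ 2 * ‖z - zs‖ ^ 2) := by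
    have hFbar_le : ‖Fbar z‖ ≤ L * ‖z - zs‖ := by simpa [hzs] using hlip z zs
    calc ∫ ω, ‖F z ω‖ ^ 2 ∂μ ≤ δ * ‖Fbar z‖ ^ 2 := hgrowth z
      _ ≤ δ * (L * ‖z - zs‖) ^ 2 := by gcongr
      _ = δ * (L ^ 2 * ‖z - zs‖ ^ 2) := by ring
  simp only [sub_right_comm z, integral_norm_sub_smul_sq (hFint z) (hFsq z), ← hFbar]
  nlinarith [mul_le_mul_of_nonneg_left hinner hη, mul_le_mul_of_nonneg_left hsecond (sq_nonneg η)]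

end Step

theorem sgd_rate_eq {m L δ : ℝ} (hL : L ≠ 0) (hδ : δ ≠ 0) :
    1 - 2 * (1 / (L * (L / m) * δ)) * m + (1 / (L * (L / m) * δ)) ^ 2 * δ * L ^ 2
      = 1 - 1 / ((L / m) ^ 2 * δ) := by
  field_simp
  ring

/-- Stochastic gradient descent under the strong growth condition.
`F z ω` is the stochastic estimate `F(z; ε)` for sample `ω`, `Fbar` its mean,
and the iterate `z k` is a function of the i.i.d. sample history `(ε_0, …, ε_{k-1})`,
integrated against the product measure. -/
theorem stmt_10 (d : ℕ) (m L κ δ : ℝ) (hm : 0 < m) (hmL : m ≤ L) (hκ : κ = L / m)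
    (hδ : 1 ≤ δ)
    {Ω : Type*} [MeasurableSpace Ω] (μ : Measure Ω) [IsProbabilityMeasure μ]
    [MeasurableSpace (EuclideanSpace ℝ (Fin d))] [BorelSpace (EuclideanSpace ℝ (Fin d))]
    (F : EuclideanSpace ℝ (Fin d) → Ω → EuclideanSpace ℝ (Fin d))
    (hFmeas : Measurable (Function.uncurry F))
    (hFint : ∀ z, Integrable (F z) μ)
    (hFsq : ∀ z, Integrable (fun ω => ‖F z ω‖ ^ 2) μ)
    (Fbar : EuclideanSpace ℝ (Fin d) → EuclideanSpace ℝ (Fin d))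
    (hFbar : ∀ z, Fbar z = ∫ ω, F z ω ∂μ)
    (hmono : ∀ z₁ z₂, ⟪Fbar z₁ - Fbar z₂, z₁ - z₂⟫ ≥ m * ‖z₁ - z₂‖ ^ 2)
    (hlip : ∀ z₁ z₂, ‖Fbar z₁ - Fbar z₂‖ ≤ L * ‖z₁ - z₂‖)
    (zs : EuclideanSpace ℝ (Fin d)) (hzs : Fbar zs = 0)
    (hgrowth : ∀ z, ∫ ω, ‖F z ω‖ ^ 2 ∂μ ≤ δ * ‖Fbar z‖ ^ 2)
    (η : ℝ) (hη : η = 1 / (L * κ * δ))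
    (z : (k : ℕ) → (Fin k → Ω) → EuclideanSpace ℝ (Fin d))
    (z0 : EuclideanSpace ℝ (Fin d)) (hz0 : ∀ ω, z 0 ω = z0)
    (hiter : ∀ k ω, z (k + 1) ω =
      z k (fun i => ω i.castSucc) - η • F (z k (fun i => ω i.castSucc)) (ω (Fin.last k))) :
    (∀ η' : ℝ, 0 < η' → ∀ zk : EuclideanSpace ℝ (Fin d),
      ∫ ω, ‖(zk - η' • F zk ω) - zs‖ ^ 2 ∂μ
        ≤ (1 - 2 * η' * m + η' ^ 2 * δ * L ^ 2) * ‖zk - zs‖ ^ 2) ∧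
    (∀ k, ∫ ω, ‖z k ω - zs‖ ^ 2 ∂(Measure.pi fun _ : Fin k => μ)
        ≤ (1 - 1 / (κ ^ 2 * δ)) ^ k * ‖z0 - zs‖ ^ 2) := by
  have hL : 0 < L := hm.trans_le hmL
  have hδ0 : 0 < δ := one_pos.trans_le hδ
  have hη0 : 0 ≤ η := by rw [hη, hκ]; positivity
  have hrate : 1 - 2 * η * m + η ^ 2 * δ * L ^ 2 = 1 - 1 / (κ ^ 2 * δ) := by
    rw [hη, hκ]
    exact sgd_rate_eq hL.ne' hδ0.ne'
  have hρ : 0 ≤ 1 - 1 / (κ ^ 2 * δ) := by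
    have hκ1 : 1 ≤ κ := hκ ▸ (one_le_div hm).2 hmL
    rw [sub_nonneg]
    exact div_le_one_of_le₀ (one_le_mul_of_one_le_of_one_le (one_le_pow₀ hκ1) hδ) (by positivity)
  have hstep := fun η' (hη' : 0 ≤ η') =>
    integral_norm_sgd_step_sub_sq_le hδ0.le hη' hFint hFsq hFbar hmono hlip hzs hgrowth
  refine ⟨fun η' hη' => hstep η' hη'.le, fun k => ?_⟩
  refine integral_comp_recursion_le μ (Φ := fun x ω => x - η • F x ω)
    (measurable_fst.sub (hFmeas.const_smul η)) hiter hz0 (V := fun x => ‖x - zs‖ ^ 2)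
    (by fun_prop) (fun _ => sq_nonneg _) hρ (fun x => ?_) (fun x => hrate ▸ hstep η hη0 x) k
  simpa only [sub_right_comm x] using integrable_norm_sub_smul_sq (hFint x) (hFsq x) (x - zs) η
end

section
/- Suppose the 2×2 matrix inequality [[1-ρ², -η],[-η, η²]] + λ₁[[L², 0],[0, -1]] + λ₂[[-2m, 1],[1, 0]] ⪯ 0 is feasible for some λ₁, λ₂ ≥ 0. Then ρ² ≥ 1 - 2mη + L²η². (In particular, minimizing over η yields ρ² ≥ 1 - m²/L².) -/
/-!
Testing the semidefinite matrix against `(1, m)` cancels the multiplier `l₂` and gives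
`ρ² ≥ 1 - 2mη + m²η² + l₁ (L² - m²)`; testing it against `(0, 1)` gives `l₁ ≥ η²`.
Since `L² - m² ≥ 0`, the two combine to `ρ² ≥ 1 - 2mη + L²η²`.
-/

open Matrix

theorem Matrix.PosSemidef.fin_two_quadratic_nonneg {R : Type*} [CommRing R] [PartialOrder R]
    [IsOrderedRing R] [StarRing R] [TrivialStar R] {A : Matrix (Fin 2) (Fin 2) R}
    (hA : A.PosSemidef) (x y : R) :
    0 ≤ A 0 0 * x ^ 2 + (A 0 1 + A 1 0) * x * y + A 1 1 * y ^ 2 := by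
  have h := hA.dotProduct_mulVec_nonneg ![x, y]
  simp only [star_trivial, dotProduct, mulVec, Fin.sum_univ_two, cons_val_zero, cons_val_one,
    cons_val_fin_one] at h
  linear_combination h

theorem stmt_12_general (m L η ρ l₁ l₂ : ℝ) (hm : 0 < m) (hmL : m ≤ L)
    (hlmi : (-(!![1 - ρ ^ 2, -η; -η, η ^ 2]
      + l₁ • !![L ^ 2, 0; 0, -1]
      + l₂ • !![-2 * m, 1; 1, 0]) : Matrix (Fin 2) (Fin 2) ℝ).PosSemidef) :
    ρ ^ 2 ≥ 1 - 2 * m * η + L ^ 2 * η ^ 2 := by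
  have hl₁ : η ^ 2 ≤ l₁ := by
    have h := hlmi.diag_nonneg (i := 1)
    simp only [Matrix.neg_apply, Matrix.add_apply, Matrix.smul_apply, of_apply, cons_val',
      cons_val_one, cons_val_fin_one, smul_eq_mul] at h
    linarith
  have hρ_lower : 1 - 2 * m * η + m ^ 2 * η ^ 2 + l₁ * (L ^ 2 - m ^ 2) ≤ ρ ^ 2 := by
    have h := hlmi.fin_two_quadratic_nonneg 1 m
    simp only [Matrix.neg_apply, Matrix.add_apply, Matrix.smul_apply, of_apply, cons_val',
      cons_val_zero, cons_val_one, cons_val_fin_one, smul_eq_mul] at h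
    linear_combination h
  have hLm : 0 ≤ L ^ 2 - m ^ 2 := by nlinarith
  linear_combination hρ_lower + mul_le_mul_of_nonneg_right hl₁ hLm

theorem stmt_12 (m L η ρ l₁ l₂ : ℝ) (hm : 0 < m) (hmL : m ≤ L) (hη : 0 < η)
    (hρ : 0 < ρ) (hl₁ : 0 ≤ l₁) (hl₂ : 0 ≤ l₂)
    (hlmi : (-(!![1 - ρ ^ 2, -η; -η, η ^ 2]
      + l₁ • !![L ^ 2, 0; 0, -1]
      + l₂ • !![-2 * m, 1; 1, 0]) : Matrix (Fin 2) (Fin 2) ℝ).PosSemidef) :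
    ρ ^ 2 ≥ 1 - 2 * m * η + L ^ 2 * η ^ 2 :=
  stmt_12_general m L η ρ l₁ l₂ hm hmL hlmi
end

section
/- If f is m-strongly convex with minimizer z* satisfying ∇f(z*) = 0, then for any z, y and β₂ ∈ (0,1), with v = (z - β₂y)/(1-β₂), the inner product bound ((1-β₁)(v - z*) + β₁(z - z*))ᵀ ∇f(z) ≥ f(z) - f(z*) + (m/2)‖z - z*‖² + (1-β₁)(β₂/(1-β₂))(f(z) - f(y)) holds, where β₁ ∈ [0,1]. -/
/-!
The combined direction equals `(z - z*) + c • (z - y)` with `c = (1 - β₁) β₂ / (1 - β₂) ≥ 0`.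
Strong convexity between `z` and `z*` bounds the first inner product, and the plain convexity
inequality between `z` and `y` bounds the second.
-/

open RealInnerProductSpace

section StrongConvexity

variable {E : Type*} [NormedAddCommGroup E] [InnerProductSpace ℝ E] {f : E → ℝ} {G : E → E}
  {m : ℝ}

theorem sub_add_sq_le_inner_of_strongConvex
    (hsc : ∀ x y, f x + ⟪G x, y - x⟫ + (m / 2) * ‖y - x‖ ^ 2 ≤ f y) (x y : E) :
    f x - f y + (m / 2) * ‖x - y‖ ^ 2 ≤ ⟪x - y, G x⟫ := by
  have h := hsc x y
  rw [← neg_sub x y, inner_neg_right, real_inner_comm, norm_neg] at h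
  linarith

theorem sub_le_inner_of_strongConvex (hm : 0 ≤ m)
    (hsc : ∀ x y, f x + ⟪G x, y - x⟫ + (m / 2) * ‖y - x‖ ^ 2 ≤ f y) (x y : E) :
    f x - f y ≤ ⟪x - y, G x⟫ := by
  have := sub_add_sq_le_inner_of_strongConvex hsc x y
  have : 0 ≤ (m / 2) * ‖x - y‖ ^ 2 := by positivity
  linarith

end StrongConvexity

theorem smul_sub_add_smul_sub_eq_of_momentum {K V : Type*} [Field K] [AddCommGroup V]
    [Module K V] {β₁ β₂ : K} (hβ₂ : β₂ ≠ 1) (z y w : V) :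
    (1 - β₁) • ((1 / (1 - β₂)) • (z - β₂ • y) - w) + β₁ • (z - w)
      = (z - w) + ((1 - β₁) * (β₂ / (1 - β₂))) • (z - y) := by
  have : 1 - β₂ ≠ 0 := sub_ne_zero.mpr hβ₂.symm
  match_scalars <;> field_simp <;> ring

theorem stmt_19_general (d : ℕ) (m β₁ β₂ : ℝ) (hm : 0 < m)
    (hβ₁' : β₁ ≤ 1) (hβ₂ : 0 < β₂) (hβ₂' : β₂ < 1)
    (f : EuclideanSpace ℝ (Fin d) → ℝ) (G : EuclideanSpace ℝ (Fin d) → EuclideanSpace ℝ (Fin d))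
    (hsc : ∀ x y, f x + ⟪G x, y - x⟫ + (m / 2) * ‖y - x‖ ^ 2 ≤ f y)
    (zs : EuclideanSpace ℝ (Fin d))
    (z y v : EuclideanSpace ℝ (Fin d))
    (hv : v = (1 / (1 - β₂)) • (z - β₂ • y)) :
    ⟪(1 - β₁) • (v - zs) + β₁ • (z - zs), G z⟫
      ≥ f z - f zs + (m / 2) * ‖z - zs‖ ^ 2
        + (1 - β₁) * (β₂ / (1 - β₂)) * (f z - f y) := by
  have hc : 0 ≤ (1 - β₁) * (β₂ / (1 - β₂)) :=
    mul_nonneg (by linarith) (div_nonneg hβ₂.le (by linarith))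
  have h_zs := sub_add_sq_le_inner_of_strongConvex hsc z zs
  have h_y := sub_le_inner_of_strongConvex hm.le hsc z y
  rw [hv, smul_sub_add_smul_sub_eq_of_momentum hβ₂'.ne, inner_add_left, real_inner_smul_left]
  linarith [mul_le_mul_of_nonneg_left h_y hc]

theorem stmt_19 (d : ℕ) (m β₁ β₂ : ℝ) (hm : 0 < m)
    (hβ₁ : 0 ≤ β₁) (hβ₁' : β₁ ≤ 1) (hβ₂ : 0 < β₂) (hβ₂' : β₂ < 1)
    (f : EuclideanSpace ℝ (Fin d) → ℝ) (G : EuclideanSpace ℝ (Fin d) → EuclideanSpace ℝ (Fin d))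
    (hsc : ∀ x y, f x + ⟪G x, y - x⟫ + (m / 2) * ‖y - x‖ ^ 2 ≤ f y)
    (zs : EuclideanSpace ℝ (Fin d)) (hmin : ∀ x, f zs ≤ f x) (hgrad : G zs = 0)
    (z y v : EuclideanSpace ℝ (Fin d))
    (hv : v = (1 / (1 - β₂)) • (z - β₂ • y)) :
    ⟪(1 - β₁) • (v - zs) + β₁ • (z - zs), G z⟫
      ≥ f z - f zs + (m / 2) * ‖z - zs‖ ^ 2
        + (1 - β₁) * (β₂ / (1 - β₂)) * (f z - f y) :=
  stmt_19_general d m β₁ β₂ hm hβ₁' hβ₂ hβ₂' f G hsc zs z y v hv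
end
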